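/- Let R1 be a pattern structure of length m and R2 a text structure of length n, with base sequences s1, s2 and label functions L1, L2 (L(i)=0 if unpaired, L(i)=p(i)−i if paired). Then R1 occurs exactly in R2 at position i (i.e., s2[i..i+m−1] = s1[1..m], position i+j−1 is unpaired in R2 iff j is unpaired in R1, and (j,k) ∈ P(R1) iff (i+j−1, i+k−1) ∈ P(R2) for all 1≤j<k≤m) if and only if s2[i..i+m−1]=s1[1..m] and L2(i+j−1)=L1(j) for all 1≤j≤m, provided that both endpoints of every base pair of R2 intersecting the window [i, i+m−1] lie inside the window. -/
import Mathlib


inductive Base : Type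
  | A | C | G | U
deriving DecidableEq

/-- Exact structural occurrence of the pattern `R₁` in the text `R₂` at position `i`
is equivalent to equality of the base sequences together with equality of the label
sequences on the window, provided every base pair of `R₂` meeting the window
`[i, i+m-1]` lies entirely inside the window. -/
theorem exact_occurrence_iff_labels
    (m n : ℕ) (s₁ s₂ : ℕ → Base)
    (U₁ U₂ : Finset ℕ) (P₁ P₂ : Finset (ℕ × ℕ))
    (hP₁ : ∀ q ∈ P₁, 1 ≤ q.1 ∧ q.1 < q.2 ∧ q.2 ≤ m)
    (hP₂ : ∀ q ∈ P₂, 1 ≤ q.1 ∧ q.1 < q.2 ∧ q.2 ≤ n)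
    (hcover₁ : ∀ j, 1 ≤ j → j ≤ m →
      (j ∈ U₁ ∧ ∀ q ∈ P₁, q.1 ≠ j ∧ q.2 ≠ j) ∨
      (j ∉ U₁ ∧ ∃! q, q ∈ P₁ ∧ (q.1 = j ∨ q.2 = j)))
    (hcover₂ : ∀ j, 1 ≤ j → j ≤ n →
      (j ∈ U₂ ∧ ∀ q ∈ P₂, q.1 ≠ j ∧ q.2 ≠ j) ∨
      (j ∉ U₂ ∧ ∃! q, q ∈ P₂ ∧ (q.1 = j ∨ q.2 = j)))
    (hnonshare₁ : ∀ q ∈ P₁, ∀ r ∈ P₁, q.2 ≠ r.1 ∧ (q.1 = r.1 ↔ q.2 = r.2))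
    (hnonshare₂ : ∀ q ∈ P₂, ∀ r ∈ P₂, q.2 ≠ r.1 ∧ (q.1 = r.1 ↔ q.2 = r.2))
    (p₁ p₂ : ℕ → ℕ)
    (hp₁U : ∀ j ∈ U₁, p₁ j = j) (hp₁P : ∀ q ∈ P₁, p₁ q.1 = q.2 ∧ p₁ q.2 = q.1)
    (hp₂U : ∀ j ∈ U₂, p₂ j = j) (hp₂P : ∀ q ∈ P₂, p₂ q.1 = q.2 ∧ p₂ q.2 = q.1)
    (L₁ L₂ : ℕ → ℤ)
    (hL₁ : ∀ j, 1 ≤ j → j ≤ m → L₁ j = if j ∈ U₁ then 0 else (p₁ j : ℤ) - (j : ℤ))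
    (hL₂ : ∀ j, 1 ≤ j → j ≤ n → L₂ j = if j ∈ U₂ then 0 else (p₂ j : ℤ) - (j : ℤ))
    (i : ℕ) (hi : 1 ≤ i) (him : i + m - 1 ≤ n) (hm : 1 ≤ m)
    (hwindow : ∀ q ∈ P₂, (i ≤ q.1 ∧ q.1 ≤ i + m - 1) ↔ (i ≤ q.2 ∧ q.2 ≤ i + m - 1)) :
    ((∀ j, 1 ≤ j → j ≤ m → s₂ (i + j - 1) = s₁ j) ∧
     (∀ j, 1 ≤ j → j ≤ m → (j ∈ U₁ ↔ (i + j - 1) ∈ U₂)) ∧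
     (∀ j k, 1 ≤ j → j < k → k ≤ m →
        ((j, k) ∈ P₁ ↔ (i + j - 1, i + k - 1) ∈ P₂)))
    ↔
    ((∀ j, 1 ≤ j → j ≤ m → s₂ (i + j - 1) = s₁ j) ∧
     (∀ j, 1 ≤ j → j ≤ m → L₂ (i + j - 1) = L₁ j)) := by
  -- label is zero iff unpaired (pattern)
  have hU₁0 : ∀ j, 1 ≤ j → j ≤ m → (j ∈ U₁ ↔ L₁ j = 0) := by
    intro j h1 h2
    rw [hL₁ j h1 h2]
    constructor
    · intro h; rw [if_pos h]
    · intro h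
      by_contra hU
      rw [if_neg hU] at h
      rcases hcover₁ j h1 h2 with ⟨hj, _⟩ | ⟨_, q, ⟨hqP, hq⟩, _⟩
      · exact hU hj
      · obtain ⟨a, b⟩ := q
        have hab : 1 ≤ a ∧ a < b ∧ b ≤ m := hP₁ _ hqP
        have hpq : p₁ a = b ∧ p₁ b = a := hp₁P _ hqP
        have hq' : a = j ∨ b = j := hq
        rcases hq' with h' | h' <;> subst h' <;> omega
  have hU₂0 : ∀ j, 1 ≤ j → j ≤ n → (j ∈ U₂ ↔ L₂ j = 0) := by
    intro j h1 h2
    rw [hL₂ j h1 h2]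
    constructor
    · intro h; rw [if_pos h]
    · intro h
      by_contra hU
      rw [if_neg hU] at h
      rcases hcover₂ j h1 h2 with ⟨hj, _⟩ | ⟨_, q, ⟨hqP, hq⟩, _⟩
      · exact hU hj
      · obtain ⟨a, b⟩ := q
        have hab : 1 ≤ a ∧ a < b ∧ b ≤ n := hP₂ _ hqP
        have hpq : p₂ a = b ∧ p₂ b = a := hp₂P _ hqP
        have hq' : a = j ∨ b = j := hq
        rcases hq' with h' | h' <;> subst h' <;> omega
  constructor
  · rintro ⟨hs, hu, hp⟩
    refine ⟨hs, ?_⟩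
    intro j h1 h2
    have hj1 : 1 ≤ i + j - 1 := by omega
    have hjn : i + j - 1 ≤ n := by omega
    by_cases hU : j ∈ U₁
    · have hU2 : i + j - 1 ∈ U₂ := (hu j h1 h2).1 hU
      rw [hL₂ _ hj1 hjn, hL₁ j h1 h2, if_pos hU2, if_pos hU]
    · have hU2 : i + j - 1 ∉ U₂ := fun h => hU ((hu j h1 h2).2 h)
      rcases hcover₁ j h1 h2 with ⟨hj, _⟩ | ⟨_, q, ⟨hqP, hq⟩, _⟩
      · exact absurd hj hU
      obtain ⟨a, b⟩ := q
      have hab : 1 ≤ a ∧ a < b ∧ b ≤ m := hP₁ _ hqP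
      have hpq : p₁ a = b ∧ p₁ b = a := hp₁P _ hqP
      have hq' : a = j ∨ b = j := hq
      rw [hL₂ _ hj1 hjn, hL₁ j h1 h2, if_neg hU2, if_neg hU]
      rcases hq' with h' | h'
      · subst h'
        have hP2 : (i + a - 1, i + b - 1) ∈ P₂ := (hp a b h1 hab.2.1 hab.2.2).1 hqP
        have hp2 : p₂ (i + a - 1) = i + b - 1 := (hp₂P _ hP2).1
        omega
      · subst h'
        have hP2 : (i + a - 1, i + b - 1) ∈ P₂ := (hp a b hab.1 hab.2.1 h2).1 hqP
        have hp2 : p₂ (i + b - 1) = i + a - 1 := (hp₂P _ hP2).2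
        omega
  · rintro ⟨hs, hl⟩
    refine ⟨hs, ?_, ?_⟩
    · intro j h1 h2
      rw [hU₁0 j h1 h2, hU₂0 (i + j - 1) (by omega) (by omega), hl j h1 h2]
    · intro j k h1 hjk h2
      have hj1 : 1 ≤ i + j - 1 := by omega
      have hjn : i + j - 1 ≤ n := by omega
      constructor
      · intro hP1
        have hU1 : j ∉ U₁ := by
          rcases hcover₁ j h1 (by omega) with ⟨hj, hall⟩ | ⟨h, _⟩
          · exact absurd rfl (hall _ hP1).1
          · exact h
        have hpj : p₁ j = k := (hp₁P _ hP1).1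
        have hL1 : L₁ j = (k : ℤ) - j := by
          rw [hL₁ j h1 (by omega), if_neg hU1, hpj]
        have hU2 : i + j - 1 ∉ U₂ := by
          intro h
          have h0 := (hU₂0 _ hj1 hjn).1 h
          rw [hl j h1 (by omega), hL1] at h0
          omega
        have hL2 : L₂ (i + j - 1) = (k : ℤ) - j := by rw [hl j h1 (by omega), hL1]
        rw [hL₂ _ hj1 hjn, if_neg hU2] at hL2
        rcases hcover₂ (i + j - 1) hj1 hjn with ⟨h, _⟩ | ⟨_, q, ⟨hqP, hq⟩, _⟩
        · exact absurd h hU2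
        obtain ⟨a, b⟩ := q
        have hab : 1 ≤ a ∧ a < b ∧ b ≤ n := hP₂ _ hqP
        have hpq : p₂ a = b ∧ p₂ b = a := hp₂P _ hqP
        have hq' : a = i + j - 1 ∨ b = i + j - 1 := hq
        rcases hq' with h' | h'
        · subst h'
          have hb : b = i + k - 1 := by omega
          subst hb
          exact hqP
        · subst h'
          omega
      · intro hP2
        have hU2 : i + j - 1 ∉ U₂ := by
          rcases hcover₂ (i + j - 1) hj1 hjn with ⟨hj, hall⟩ | ⟨h, _⟩
          · exact absurd rfl (hall _ hP2).1
          · exact h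
        have hpj : p₂ (i + j - 1) = i + k - 1 := (hp₂P _ hP2).1
        have hL2 : L₂ (i + j - 1) = (k : ℤ) - j := by
          rw [hL₂ _ hj1 hjn, if_neg hU2, hpj]
          omega
        have hU1 : j ∉ U₁ := by
          intro h
          have h0 := (hU₁0 j h1 (by omega)).1 h
          rw [← hl j h1 (by omega), hL2] at h0
          omega
        have hL1 : L₁ j = (k : ℤ) - j := by rw [← hl j h1 (by omega), hL2]
        rw [hL₁ j h1 (by omega), if_neg hU1] at hL1
        rcases hcover₁ j h1 (by omega) with ⟨h, _⟩ | ⟨_, q, ⟨hqP, hq⟩, _⟩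
        · exact absurd h hU1
        obtain ⟨a, b⟩ := q
        have hab : 1 ≤ a ∧ a < b ∧ b ≤ m := hP₁ _ hqP
        have hpq : p₁ a = b ∧ p₁ b = a := hp₁P _ hqP
        have hq' : a = j ∨ b = j := hq
        rcases hq' with h' | h'
        · subst h'
          have hb : b = k := by omega
          subst hb
          exact hqP
        · subst h'
          omega
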